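/- In the stick-breaking construction, if β_1, β_2, ... are i.i.d. Beta(1, α_0) random variables with α_0 > 0 and π_j = β_j · prod_{l=1}^{j-1}(1 - β_l), then sum_{j=1}^∞ π_j = 1 almost surely. -/

import Mathlib

open MeasureTheory BigOperators Filter

/-- The Beta(1, α₀) distribution on ℝ: density `α₀ (1-x)^(α₀-1)` on `(0,1)`. -/
noncomputable def betaOneMeasure (α₀ : ℝ) : Measure ℝ :=
  (volume.restrict (Set.Ioo (0 : ℝ) 1)).withDensity
    (fun x => ENNReal.ofReal (α₀ * (1 - x) ^ (α₀ - 1)))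

lemma stick_det (b : ℕ → ℝ) (hb : ∀ n, b n ∈ Set.Ioo (0:ℝ) 1)
    (hfreq : ∃ᶠ n in atTop, 1/2 < b n) :
    ∑' j : ℕ, b j * ∏ l ∈ Finset.range j, (1 - b l) = 1 := by
  set P : ℕ → ℝ := fun J => ∏ l ∈ Finset.range J, (1 - b l) with hP
  have hfac0 : ∀ l, 0 ≤ 1 - b l := fun l => by have := (hb l).2; linarith
  have hfac1 : ∀ l, 1 - b l ≤ 1 := fun l => by have := (hb l).1; linarith
  have hPnn : ∀ J, 0 ≤ P J := fun J => Finset.prod_nonneg fun l _ => hfac0 l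
  have hPanti : Antitone P := by
    refine antitone_nat_of_succ_le fun n => ?_
    rw [hP]
    simp only [Finset.prod_range_succ]
    calc (∏ l ∈ Finset.range n, (1 - b l)) * (1 - b n)
        ≤ (∏ l ∈ Finset.range n, (1 - b l)) * 1 := by
          exact mul_le_mul_of_nonneg_left (hfac1 n) (hPnn n)
      _ = P n := by rw [mul_one]
  have key : ∀ J, ∑ j ∈ Finset.range J, b j * ∏ l ∈ Finset.range j, (1 - b l) = 1 - P J := by
    intro J
    induction J with
    | zero => simp [hP]
    | succ n ih =>
        rw [Finset.sum_range_succ, ih, hP]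
        simp only [Finset.prod_range_succ]
        ring
  have hsmall : ∀ k : ℕ, ∃ J, P J ≤ (1/2 : ℝ) ^ k := by
    intro k
    induction k with
    | zero => exact ⟨0, by simp [hP]⟩
    | succ n ih =>
        obtain ⟨J, hJ⟩ := ih
        obtain ⟨m, hmJ, hm⟩ := (hfreq.and_eventually (eventually_ge_atTop J)).exists
        refine ⟨m + 1, ?_⟩
        have h1 : P (m + 1) = P m * (1 - b m) := by
          rw [hP]; simp [Finset.prod_range_succ]
        have h2 : 1 - b m ≤ 1/2 := by linarith
        have h3 : P m ≤ P J := hPanti hm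
        calc P (m+1) = P m * (1 - b m) := h1
          _ ≤ P J * (1/2) := by
              exact mul_le_mul h3 h2 (hfac0 m) (le_trans (hPnn J) (le_refl _))
          _ ≤ (1/2)^n * (1/2) := by
              exact mul_le_mul_of_nonneg_right hJ (by norm_num)
          _ = (1/2)^(n+1) := by ring
  have hP0 : Tendsto P atTop (nhds 0) := by
    rw [Metric.tendsto_atTop]
    intro ε hε
    obtain ⟨k, hk⟩ := exists_pow_lt_of_lt_one hε (by norm_num : (1/2:ℝ) < 1)
    obtain ⟨J, hJ⟩ := hsmall k
    refine ⟨J, fun n hn => ?_⟩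
    rw [Real.dist_eq, sub_zero, abs_of_nonneg (hPnn n)]
    exact lt_of_le_of_lt (le_trans (hPanti hn) hJ) hk
  have hnn : ∀ j, 0 ≤ b j * ∏ l ∈ Finset.range j, (1 - b l) :=
    fun j => mul_nonneg (hb j).1.le (hPnn j)
  have : HasSum (fun j => b j * ∏ l ∈ Finset.range j, (1 - b l)) 1 := by
    rw [hasSum_iff_tendsto_nat_of_nonneg hnn]
    have : Tendsto (fun J => 1 - P J) atTop (nhds (1 - 0)) :=
      (tendsto_const_nhds.sub hP0)
    simpa [key] using this
  exact this.tsum_eq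

lemma betaOne_compl (α₀ : ℝ) : betaOneMeasure α₀ (Set.Ioo (0:ℝ) 1)ᶜ = 0 := by
  rw [betaOneMeasure, withDensity_apply _ measurableSet_Ioo.compl,
    Measure.restrict_restrict measurableSet_Ioo.compl]
  simp

lemma betaOne_Ioi_pos (α₀ : ℝ) (hα₀ : 0 < α₀) :
    0 < betaOneMeasure α₀ (Set.Ioi (1/2 : ℝ)) := by
  rw [betaOneMeasure, withDensity_apply _ measurableSet_Ioi,
    Measure.restrict_restrict measurableSet_Ioi]
  set c : ℝ := min ((1/4:ℝ) ^ (α₀-1)) ((1/2:ℝ) ^ (α₀-1)) with hc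
  have hcpos : 0 < c :=
    lt_min (Real.rpow_pos_of_pos (by norm_num) _) (Real.rpow_pos_of_pos (by norm_num) _)
  have hsub : Set.Ioo (1/2:ℝ) (3/4) ⊆ Set.Ioi (1/2:ℝ) ∩ Set.Ioo 0 1 := by
    intro x hx
    exact ⟨hx.1, by constructor <;> [linarith [hx.1]; linarith [hx.2]]⟩
  have hmono := lintegral_mono_set (μ := volume)
    (f := fun x => ENNReal.ofReal (α₀ * (1 - x) ^ (α₀ - 1))) hsub
  have hlow : ENNReal.ofReal (α₀ * c) * volume (Set.Ioo (1/2:ℝ) (3/4)) ≤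
      ∫⁻ x in Set.Ioo (1/2:ℝ) (3/4), ENNReal.ofReal (α₀ * (1 - x) ^ (α₀ - 1)) := by
    rw [← setLIntegral_const (Set.Ioo (1/2:ℝ) (3/4)) (ENNReal.ofReal (α₀ * c))]
    refine setLIntegral_mono' measurableSet_Ioo fun x hx => ?_
    apply ENNReal.ofReal_le_ofReal
    refine mul_le_mul_of_nonneg_left ?_ hα₀.le
    have h1 : (1/4:ℝ) ≤ 1 - x := by linarith [hx.2]
    have h2 : 1 - x ≤ 1/2 := by linarith [hx.1]
    rcases le_or_gt 0 (α₀ - 1) with h | h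
    · exact le_trans (min_le_left _ _) (Real.rpow_le_rpow (by norm_num) h1 h)
    · exact le_trans (min_le_right _ _)
        (Real.rpow_le_rpow_of_nonpos (by linarith) h2 h.le)
  refine lt_of_lt_of_le (lt_of_lt_of_le ?_ hlow) hmono
  refine ENNReal.mul_pos ?_ ?_
  · exact (ENNReal.ofReal_pos.mpr (mul_pos hα₀ hcpos)).ne'
  · rw [Real.volume_Ioo]
    simp only [ne_eq, ENNReal.ofReal_eq_zero, not_le]
    norm_num

/-- stick-breaking: if `β₁, β₂, …` are i.i.d. `Beta(1, α₀)` random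
variables (`α₀ > 0`) and `π_j = β_j ∏_{l<j} (1 - β_l)`, then `∑_j π_j = 1` a.s. -/
theorem stick_breaking_sums_to_one {Ω : Type*} [MeasurableSpace Ω]
    (ℙ : Measure Ω) [IsProbabilityMeasure ℙ]
    (α₀ : ℝ) (hα₀ : 0 < α₀)
    (β : ℕ → Ω → ℝ) (hmeas : ∀ n, Measurable (β n))
    (hindep : ProbabilityTheory.iIndepFun β ℙ)
    (hdist : ∀ n, Measure.map (β n) ℙ = betaOneMeasure α₀) :
    ∀ᵐ ω ∂ℙ,
      ∑' j : ℕ, β j ω * ∏ l ∈ Finset.range j, (1 - β l ω) = 1 := by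
  have hIoo : ∀ᵐ ω ∂ℙ, ∀ n, β n ω ∈ Set.Ioo (0:ℝ) 1 := by
    rw [MeasureTheory.ae_all_iff]
    intro n
    have h0 : ℙ (β n ⁻¹' (Set.Ioo (0:ℝ) 1)ᶜ) = 0 := by
      rw [← Measure.map_apply (hmeas n) measurableSet_Ioo.compl, hdist n, betaOne_compl]
    rw [ae_iff]
    exact h0
  set A : ℕ → Set Ω := fun n => β n ⁻¹' Set.Ioi (1/2:ℝ) with hA
  have hAm : ∀ n, MeasurableSet (A n) := fun n => (hmeas n) measurableSet_Ioi
  have hAp : ∀ n, ℙ (A n) = betaOneMeasure α₀ (Set.Ioi (1/2:ℝ)) := fun n => by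
    rw [hA, ← hdist n, Measure.map_apply (hmeas n) measurableSet_Ioi]
  have hAindep : ProbabilityTheory.iIndepSet A ℙ := by
    rw [ProbabilityTheory.iIndepSet_iff_meas_biInter hAm]
    intro s
    exact hindep.meas_biInter fun i _ => ⟨Set.Ioi (1/2:ℝ), measurableSet_Ioi, rfl⟩
  have hsum : (∑' n, ℙ (A n)) = ⊤ := by
    simp_rw [hAp]
    exact ENNReal.tsum_const_eq_top_of_ne_zero (betaOne_Ioi_pos α₀ hα₀).ne'
  have hlimsup := ProbabilityTheory.measure_limsup_eq_one hAm hAindep hsum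
  have hfreq : ∀ᵐ ω ∂ℙ, ∃ᶠ n in atTop, 1/2 < β n ω := by
    have hmem : ∀ᵐ ω ∂ℙ, ω ∈ limsup A atTop := by
      rw [ae_iff]
      have := measure_compl (MeasurableSet.measurableSet_limsup hAm) (measure_ne_top ℙ _)
      rw [hlimsup, measure_univ] at this
      simpa [Set.compl_def] using this
    filter_upwards [hmem] with ω hω
    rw [mem_limsup_iff_frequently_mem] at hω
    exact hω
  filter_upwards [hIoo, hfreq] with ω h1 h2
  exact stick_det (fun n => β n ω) h1 h2
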